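/- arXiv:1708.07794 — 3 statements merged into one kernel-verified Lean document; each statement's English description precedes it below -/
import Mathlib

section
/- Let f₁,…,f_K be holomorphic functions on a neighborhood of 0 in ℂⁿ with f_j(0)=0 for each j, and set g = Σ_{j=1}^{K} |f_j|². Then g satisfies property PS: for every nonconstant holomorphic germ z:(ℂ,0)→(ℂⁿ,0), if g∘z vanishes to finite order n at 0, then n is even, n = 2k, and Δᵏ(g∘z)(0) > 0, where Δ is the Laplacian on ℂ ≅ ℝ². -/
open Topology Filter Complex
open scoped ENNReal

noncomputable section

/-- The Laplacian on `ℂ ≅ ℝ²` acting on real-valued functions. -/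
def lap (u : ℂ → ℝ) (x : ℂ) : ℝ :=
  fderiv ℝ (fun y => fderiv ℝ u y 1) x 1 +
    fderiv ℝ (fun y => fderiv ℝ u y Complex.I) x Complex.I

/-- `u` vanishes to order exactly `n` at `0`. -/
def VanishExactly {E F : Type*} [NormedAddCommGroup E] [NormedSpace ℝ E]
    [NormedAddCommGroup F] [NormedSpace ℝ F] (u : E → F) (n : ℕ) : Prop :=
  (∀ j, j < n → iteratedFDeriv ℝ j u 0 = 0) ∧ iteratedFDeriv ℝ n u 0 ≠ 0

/-- `z` is holomorphic in a neighborhood of `0` (a holomorphic germ at `0`). -/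
def HoloGerm {E : Type*} [NormedAddCommGroup E] [NormedSpace ℂ E] (z : ℂ → E) : Prop :=
  ∀ᶠ t in 𝓝 (0 : ℂ), DifferentiableAt ℂ z t

/-- `z` is a nonconstant germ at `0`. -/
def NonconstGerm {E : Type*} [NormedAddCommGroup E] (z : ℂ → E) : Prop :=
  ¬ ∀ᶠ t in 𝓝 (0 : ℂ), z t = z 0

/-- The order of vanishing at `0`: the smallest positive `m` whose `m`-th iterated
Fréchet derivative at `0` is nonzero, as an extended real (`⊤` if all vanish). -/
def nu {E F : Type*} [NormedAddCommGroup E] [NormedSpace ℝ E]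
    [NormedAddCommGroup F] [NormedSpace ℝ F] (u : E → F) : ℝ≥0∞ :=
  sInf {x : ℝ≥0∞ | ∃ m : ℕ, 1 ≤ m ∧ x = (m : ℝ≥0∞) ∧ iteratedFDeriv ℝ m u 0 ≠ 0}

/-- Regular order of contact of the hypersurface `{r = 0}` with complex curves at `0`. -/
def regOrder {E : Type*} [NormedAddCommGroup E] [NormedSpace ℂ E] (r : E → ℝ) : ℝ≥0∞ :=
  ⨆ (z : ℂ → E) (_ : HoloGerm z) (_ : z 0 = 0) (_ : deriv z 0 ≠ 0),
    nu (fun t => r (z t))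

/-- Singular order of contact of the hypersurface `{r = 0}` with complex curves at `0`. -/
def singOrder {E : Type*} [NormedAddCommGroup E] [NormedSpace ℂ E] (r : E → ℝ) : ℝ≥0∞ :=
  ⨆ (z : ℂ → E) (_ : HoloGerm z) (_ : z 0 = 0) (_ : NonconstGerm z),
    nu (fun t => r (z t)) / nu z

/-- Property PS for a smooth germ `g : (E,0) → (ℝ,0)`. -/
def PropertyPS {E : Type*} [NormedAddCommGroup E] [NormedSpace ℂ E] (g : E → ℝ) : Prop :=
  ∀ z : ℂ → E, HoloGerm z → z 0 = 0 → NonconstGerm z →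
    ∀ n : ℕ, VanishExactly (fun t => g (z t)) n →
      ∃ k : ℕ, n = 2 * k ∧ 0 < lap^[k] (fun t => g (z t)) 0

/-- The `k`-th order Taylor polynomial of `r` at `0`. -/
def jet {E : Type*} [NormedAddCommGroup E] [NormedSpace ℝ E] (r : E → ℝ) (k : ℕ) (x : E) : ℝ :=
  ∑ j ∈ Finset.range (k + 1), (j.factorial : ℝ)⁻¹ • iteratedFDeriv ℝ j r 0 (fun _ => x)

/-- Evaluation of a polynomial in `z` and `z̄`. -/
def mixedEval {n : ℕ} (g : MvPolynomial (Fin n ⊕ Fin n) ℂ) (x : Fin n → ℂ) : ℂ :=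
  MvPolynomial.eval (Sum.elim x (fun i => starRingEnd ℂ (x i))) g

/-- `ρ` is a defining function for the hypersurface germ defined by `r` at `0`. -/
def IsDefiningFn {n : ℕ} (r ρ : (Fin n → ℂ) → ℝ) : Prop :=
  (∃ U ∈ 𝓝 (0 : Fin n → ℂ), ContDiffOn ℝ (⊤ : ℕ∞) ρ U) ∧ ρ 0 = 0 ∧
    fderiv ℝ ρ 0 ≠ 0 ∧ ∀ᶠ x in 𝓝 (0 : Fin n → ℂ), (ρ x = 0 ↔ r x = 0)

/-- Property PS for the hypersurface germ `(M,0) = ({r = 0}, 0)`. -/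
def HypersurfacePS {n : ℕ} (r : (Fin n → ℂ) → ℝ) : Prop :=
  ∃ k₀ : ℕ, ∀ k, k₀ ≤ k → ∃ ρ : (Fin n → ℂ) → ℝ, IsDefiningFn r ρ ∧
    ∃ (h : MvPolynomial (Fin n) ℂ) (g : MvPolynomial (Fin n ⊕ Fin n) ℂ),
      fderiv ℂ (fun x => MvPolynomial.eval x h) 0 ≠ 0 ∧
      (∀ m ∈ g.support, (∃ i, m (Sum.inl i) ≠ 0) ∧ (∃ i, m (Sum.inr i) ≠ 0)) ∧
      (∀ x, (mixedEval g x).im = 0) ∧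
      (∀ x, jet ρ k x = 2 * (MvPolynomial.eval x h).re + (mixedEval g x).re) ∧
      (∀ z : ℂ → (Fin n → ℂ), HoloGerm z → z 0 = 0 → NonconstGerm z →
        (∀ᶠ t in 𝓝 (0 : ℂ), MvPolynomial.eval (z t) h = 0) →
        ∀ l : ℕ, VanishExactly (fun t => (mixedEval g (z t)).re) l →
          ∃ j : ℕ, l = 2 * j ∧ 0 < lap^[j] (fun t => (mixedEval g (z t)).re) 0)



namespace PSAux

/-! ### Directional derivatives -/

def Dd {F : Type*} [NormedAddCommGroup F] [NormedSpace ℝ F] (w : ℂ) (f : ℂ → F) : ℂ → F :=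
  fun y => fderiv ℝ f y w

def DdL {F : Type*} [NormedAddCommGroup F] [NormedSpace ℝ F] (ws : List ℂ) (f : ℂ → F) :
    ℂ → F := ws.foldr Dd f

section Basic
variable {F : Type*} [NormedAddCommGroup F] [NormedSpace ℝ F]

@[simp] lemma DdL_nil (f : ℂ → F) : DdL [] f = f := rfl
@[simp] lemma DdL_cons (w : ℂ) (ws : List ℂ) (f : ℂ → F) :
    DdL (w :: ws) f = Dd w (DdL ws f) := rfl

lemma DdL_append (ws vs : List ℂ) (f : ℂ → F) :
    DdL (ws ++ vs) f = DdL ws (DdL vs f) := by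
  simp [DdL, List.foldr_append]

lemma Dd_congr_on {f g : ℂ → F} {s : Set ℂ} (hs : IsOpen s) (h : Set.EqOn f g s) (w : ℂ) :
    Set.EqOn (Dd w f) (Dd w g) s := fun x hx => by
  simp only [Dd]
  rw [Filter.EventuallyEq.fderiv_eq (Filter.eventuallyEq_of_mem (hs.mem_nhds hx) h)]

lemma DdL_congr_on {f g : ℂ → F} {s : Set ℂ} (hs : IsOpen s) (h : Set.EqOn f g s) (ws : List ℂ) :
    Set.EqOn (DdL ws f) (DdL ws g) s := by
  induction ws with
  | nil => exact h
  | cons w ws ih => exact Dd_congr_on hs ih w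

variable [CompleteSpace F]

lemma Dd_analyticOnNhd {f : ℂ → F} {s : Set ℂ} (hf : AnalyticOnNhd ℝ f s) (w : ℂ) :
    AnalyticOnNhd ℝ (Dd w f) s := by
  have : Dd w f = fun y => (ContinuousLinearMap.apply ℝ F w) (fderiv ℝ f y) := rfl
  rw [this]
  exact (ContinuousLinearMap.apply ℝ F w).comp_analyticOnNhd hf.fderiv

lemma DdL_analyticOnNhd {f : ℂ → F} {s : Set ℂ} (hf : AnalyticOnNhd ℝ f s) (ws : List ℂ) :
    AnalyticOnNhd ℝ (DdL ws f) s := by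
  induction ws with
  | nil => exact hf
  | cons w ws ih => exact Dd_analyticOnNhd ih w

lemma Dd_add_on {f g : ℂ → F} {s : Set ℂ} (hf : AnalyticOnNhd ℝ f s)
    (hg : AnalyticOnNhd ℝ g s) (w : ℂ) :
    Set.EqOn (Dd w (fun y => f y + g y)) (fun y => Dd w f y + Dd w g y) s := fun x hx => by
  simp only [Dd]
  rw [fderiv_fun_add ((hf x hx).differentiableAt) ((hg x hx).differentiableAt)]
  rfl

lemma DdL_add_on {f g : ℂ → F} {s : Set ℂ} (hs : IsOpen s) (hf : AnalyticOnNhd ℝ f s)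
    (hg : AnalyticOnNhd ℝ g s) (ws : List ℂ) :
    Set.EqOn (DdL ws (fun y => f y + g y)) (fun y => DdL ws f y + DdL ws g y) s := by
  induction ws with
  | nil => intro x _; rfl
  | cons w ws ih =>
    intro x hx
    have h1 : Set.EqOn (Dd w (DdL ws (fun y => f y + g y)))
        (Dd w (fun y => DdL ws f y + DdL ws g y)) s := Dd_congr_on hs ih w
    have h2 := Dd_add_on (DdL_analyticOnNhd hf ws) (DdL_analyticOnNhd hg ws) w hx
    exact (h1 hx).trans h2

/-- Iterated full derivatives at points of an open set where `f` is analytic are given by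
iterated directional derivatives. -/
lemma iteratedFDeriv_eq_DdL {s : Set ℂ} (hs : IsOpen s) :
    ∀ (n : ℕ) (f : ℂ → F), AnalyticOnNhd ℝ f s → ∀ x ∈ s, ∀ m : Fin n → ℂ,
    iteratedFDeriv ℝ n f x m = DdL (List.ofFn m) f x := by
  intro n
  induction n with
  | zero => intro f _ x _ m; simp [DdL]
  | succ n ih =>
    intro f hf x hx m
    rw [iteratedFDeriv_succ_apply_right]
    have hcd : ContDiffOn ℝ (n : ℕ∞) (fun y => fderiv ℝ f y) s :=
      hf.fderiv.contDiffOn hs.uniqueDiffOn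
    have key : iteratedFDeriv ℝ n (Dd (m (Fin.last n)) f) x (Fin.init m) =
        iteratedFDeriv ℝ n (fun y => fderiv ℝ f y) x (Fin.init m) (m (Fin.last n)) := by
      have : Dd (m (Fin.last n)) f =
          (ContinuousLinearMap.apply ℝ F (m (Fin.last n))) ∘ (fun y => fderiv ℝ f y) := rfl
      rw [this, ← iteratedFDerivWithin_of_isOpen n hs hx,
        ← iteratedFDerivWithin_of_isOpen (f := fun y => fderiv ℝ f y) n hs hx,
        (ContinuousLinearMap.apply ℝ F (m (Fin.last n))).iteratedFDerivWithin_comp_left (hcd x hx)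
          hs.uniqueDiffOn hx le_rfl]
      rfl
    rw [← key, ih (Dd (m (Fin.last n)) f) (Dd_analyticOnNhd hf _) x hx (Fin.init m),
      List.ofFn_succ' m, List.concat_eq_append]
    show DdL (List.ofFn (Fin.init m)) (Dd (m (Fin.last n)) f) x =
      DdL (List.ofFn (Fin.init m) ++ [m (Fin.last n)]) f x
    rw [DdL_append]
    rfl

end Basic

/-- If all iterated directional derivatives of `u` at `0` of order `≤ 2k` vanish,
then `lap^[k] u 0 = 0`. -/
lemma lap_iterate_eq_zero {s : Set ℂ} (hs : IsOpen s) (h0 : (0 : ℂ) ∈ s) :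
    ∀ (k : ℕ) (u : ℂ → ℝ), AnalyticOnNhd ℝ u s →
    (∀ ws : List ℂ, ws.length ≤ 2 * k → DdL ws u 0 = 0) → lap^[k] u 0 = 0 := by
  intro k
  induction k with
  | zero => intro u _ H; simpa using H [] (by simp)
  | succ k ih =>
    intro u hu H
    rw [Function.iterate_succ_apply]
    have h1 : AnalyticOnNhd ℝ (Dd 1 (Dd 1 u)) s := Dd_analyticOnNhd (Dd_analyticOnNhd hu 1) 1
    have h2 : AnalyticOnNhd ℝ (Dd Complex.I (Dd Complex.I u)) s :=
      Dd_analyticOnNhd (Dd_analyticOnNhd hu _) _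
    have hlap : lap u = fun y => Dd 1 (Dd 1 u) y + Dd Complex.I (Dd Complex.I u) y := rfl
    apply ih (lap u) (by rw [hlap]; exact h1.add h2)
    intro ws hws
    rw [hlap]
    rw [DdL_add_on hs h1 h2 ws h0]
    simp only
    have e1 : DdL ws (Dd 1 (Dd 1 u)) 0 = DdL (ws ++ [1, 1]) u 0 := by
      rw [DdL_append]; rfl
    have e2 : DdL ws (Dd Complex.I (Dd Complex.I u)) 0 =
        DdL (ws ++ [Complex.I, Complex.I]) u 0 := by
      rw [DdL_append]; rfl
    rw [e1, e2, H _ (by simp; omega), H _ (by simp; omega), add_zero]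

/-! ### The class `Good` of mixed germs of high order -/

lemma conjComp {g : ℂ → ℂ} {x : ℂ} (hg : AnalyticAt ℝ g x) :
    AnalyticAt ℝ (fun t => (starRingEnd ℂ) (g t)) x :=
  (Complex.conjCLE.toContinuousLinearMap.analyticAt (g x)).comp hg

lemma analyticAt_deriv {a : ℂ → ℂ} (ha : AnalyticAt ℂ a 0) : AnalyticAt ℂ (deriv a) 0 := by
  obtain ⟨t, ht, h⟩ := eventually_nhds_iff.mp ha.eventually_analyticAt.eventually_nhds
  exact (AnalyticOnNhd.deriv (fun y hy => (ht y hy).self_of_nhds)) 0 h.2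

def model (p q : ℕ) (a b : ℂ → ℂ) : ℂ → ℂ :=
  fun t => t ^ p * a t * (starRingEnd ℂ) (t ^ q * b t)

lemma model_analyticAt {a b : ℂ → ℂ} {y : ℂ} (p q : ℕ) (ha : AnalyticAt ℂ a y)
    (hb : AnalyticAt ℂ b y) : AnalyticAt ℝ (model p q a b) y := by
  have h1 : AnalyticAt ℝ (fun t : ℂ => t ^ p * a t) y :=
    ((analyticAt_id.pow p).mul ha).restrictScalars
  have h2 : AnalyticAt ℝ (fun t : ℂ => t ^ q * b t) y :=
    ((analyticAt_id.pow q).mul hb).restrictScalars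
  exact h1.mul (conjComp h2)

/-- The class of finite sums of germs `t^p * a t * conj (t^q * b t)` with `p + q ≥ m`. -/
inductive Good : ℕ → (ℂ → ℂ) → Prop
  | term (m p q : ℕ) (a b : ℂ → ℂ) (ha : AnalyticAt ℂ a 0) (hb : AnalyticAt ℂ b 0)
      (hm : m ≤ p + q) (u : ℂ → ℂ) (hu : u =ᶠ[𝓝 0] model p q a b) : Good m u
  | add (m : ℕ) (u v w : ℂ → ℂ) (hu : Good m u) (hv : Good m v)
      (hw : w =ᶠ[𝓝 0] fun t => u t + v t) : Good m w

lemma Good.eventually_analyticAt {m : ℕ} {u : ℂ → ℂ} (h : Good m u) :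
    ∀ᶠ y in 𝓝 (0 : ℂ), AnalyticAt ℝ u y := by
  induction h with
  | term p q a b ha hb hm u' hu =>
    filter_upwards [eventually_eventually_nhds.mpr hu, ha.eventually_analyticAt,
      hb.eventually_analyticAt] with y hy hay hby
    have hy' : u' =ᶠ[𝓝 y] model p q a b := hy
    exact (model_analyticAt p q hay hby).congr hy'.symm
  | add u v w hu hv hw ihu ihv =>
    filter_upwards [eventually_eventually_nhds.mpr hw, ihu, ihv] with y hy hay hby
    have hy' : w =ᶠ[𝓝 y] fun t => u t + v t := hy
    exact (hay.add hby).congr hy'.symm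

lemma Good.value {m : ℕ} {u : ℂ → ℂ} (h : Good m u) (hm : 1 ≤ m) : u 0 = 0 := by
  induction h with
  | term p q a b ha hb hmpq u' hu =>
    rw [hu.eq_of_nhds]
    rcases Nat.lt_or_ge 0 p with hp | hp
    · simp [model, zero_pow (by omega : p ≠ 0)]
    · have hq : q ≠ 0 := by omega
      simp [model, zero_pow hq]
  | add u v w hu hv hw ihu ihv =>
    rw [hw.eq_of_nhds]
    show u 0 + v 0 = 0
    rw [ihu, ihv, add_zero]

lemma Good.dd {m : ℕ} {u : ℂ → ℂ} (h : Good m u) (hm : 1 ≤ m) (w : ℂ) :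
    Good (m - 1) (Dd w u) := by
  induction h with
  | term p q a b ha hb hmpq u' hu =>
    have hda : AnalyticAt ℂ (deriv a) 0 := analyticAt_deriv ha
    have hdb : AnalyticAt ℂ (deriv b) 0 := analyticAt_deriv hb
    have G1 : Good (m-1) (fun t => model (p-1) q (fun t => ((p:ℂ) * w) * a t) b t
        + model p q (fun t => w * deriv a t) b t) :=
      .add _ _ _ _ (.term _ _ _ _ _ (analyticAt_const.mul ha) hb (by omega) _ EventuallyEq.rfl)
        (.term _ _ _ _ _ (analyticAt_const.mul hda) hb (by omega) _ EventuallyEq.rfl)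
        EventuallyEq.rfl
    have G2 : Good (m-1) (fun t => model p (q-1) a (fun t => ((q:ℂ) * w) * b t) t
        + model p q a (fun t => w * deriv b t) t) :=
      .add _ _ _ _ (.term _ _ _ _ _ ha (analyticAt_const.mul hb) (by omega) _ EventuallyEq.rfl)
        (.term _ _ _ _ _ ha (analyticAt_const.mul hdb) (by omega) _ EventuallyEq.rfl)
        EventuallyEq.rfl
    refine .add _ _ _ _ G1 G2 ?_
    filter_upwards [eventually_eventually_nhds.mpr hu, ha.eventually_analyticAt,
      hb.eventually_analyticAt] with y hy hay hby
    have hy' : u' =ᶠ[𝓝 y] model p q a b := hy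
    have hfd : fderiv ℝ u' y = fderiv ℝ (model p q a b) y := hy'.fderiv_eq
    have h₁ : HasDerivAt (fun t : ℂ => t ^ p * a t)
        ((p : ℂ) * y ^ (p-1) * a y + y ^ p * deriv a y) y :=
      (hasDerivAt_pow p y).mul hay.differentiableAt.hasDerivAt
    have h₂ : HasDerivAt (fun t : ℂ => t ^ q * b t)
        ((q : ℂ) * y ^ (q-1) * b y + y ^ q * deriv b y) y :=
      (hasDerivAt_pow q y).mul hby.differentiableAt.hasDerivAt
    have H₁ := h₁.hasFDerivAt.restrictScalars ℝ
    have H₂ := (Complex.conjCLE.toContinuousLinearMap.hasFDerivAt).comp y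
      (h₂.hasFDerivAt.restrictScalars ℝ)
    have Hm : HasFDerivAt (model p q a b) _ y := H₁.mul H₂
    show fderiv ℝ u' y w = _
    rw [hfd, Hm.fderiv]
    simp only [ContinuousLinearMap.add_apply, ContinuousLinearMap.smul_apply,
      ContinuousLinearMap.coe_comp', Function.comp_apply,
      ContinuousLinearMap.coe_restrictScalars', ContinuousLinearMap.smulRight_apply,
      ContinuousLinearMap.one_apply, Complex.conjCLE_apply, smul_eq_mul, model,
        ContinuousLinearMap.toSpanSingleton_apply,
      ContinuousLinearEquiv.coe_coe, map_add, map_mul, map_pow, map_natCast]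
    ring
  | add u v w' hu hv hw ihu ihv =>
    refine .add _ _ _ _ ihu ihv ?_
    filter_upwards [eventually_eventually_nhds.mpr hw, hu.eventually_analyticAt,
      hv.eventually_analyticAt] with y hy hay hby
    have hy' : w' =ᶠ[𝓝 y] fun t => u t + v t := hy
    show fderiv ℝ w' y w = _
    rw [hy'.fderiv_eq, fderiv_fun_add hay.differentiableAt hby.differentiableAt]
    rfl

lemma Good.ddL {m : ℕ} {u : ℂ → ℂ} (h : Good m u) :
    ∀ ws : List ℂ, ws.length ≤ m → Good (m - ws.length) (DdL ws u) := by
  intro ws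
  induction ws with
  | nil => intro _; simpa using h
  | cons w ws ih =>
    intro hlen
    simp only [List.length_cons] at hlen ⊢
    have h2 : Good (m - ws.length - 1) (Dd w (DdL ws u)) :=
      (ih (by omega)).dd (by omega) w
    have he : m - ws.length - 1 = m - (ws.length + 1) := by omega
    rw [he] at h2
    exact h2

lemma Good.ddL_zero {m : ℕ} {u : ℂ → ℂ} (h : Good m u) (ws : List ℂ)
    (hlen : ws.length < m) : DdL ws u 0 = 0 :=
  (h.ddL ws (by omega)).value (by omega)

lemma Good.zero (m : ℕ) : Good m (fun _ => (0 : ℂ)) :=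
  .term m m 0 (fun _ => 0) (fun _ => 1) analyticAt_const analyticAt_const (by omega) _
    (by apply Filter.EventuallyEq.of_eq; funext t; simp [model])

lemma Good.sum {m : ℕ} {K : ℕ} (v : Fin K → ℂ → ℂ) (h : ∀ j, Good m (v j)) :
    Good m (fun t => ∑ j, v j t) := by
  classical
  induction (Finset.univ : Finset (Fin K)) using Finset.cons_induction with
  | empty => simpa using Good.zero m
  | cons j s hj ih =>
    exact .add _ _ _ _ (h j) ih
      (Filter.EventuallyEq.of_eq (by funext t; rw [Finset.sum_cons]))

/-! ### The complex Laplacian and `Mix` sums -/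

def lapC (f : ℂ → ℂ) : ℂ → ℂ :=
  fun x => Dd 1 (Dd 1 f) x + Dd Complex.I (Dd Complex.I f) x

lemma lapC_congr_on {f g : ℂ → ℂ} {s : Set ℂ} (hs : IsOpen s) (h : Set.EqOn f g s) :
    Set.EqOn (lapC f) (lapC g) s := fun x hx => by
  simp only [lapC]
  rw [Dd_congr_on hs (Dd_congr_on hs h 1) 1 hx,
    Dd_congr_on hs (Dd_congr_on hs h Complex.I) Complex.I hx]

lemma lap_congr_on {f g : ℂ → ℝ} {s : Set ℂ} (hs : IsOpen s) (h : Set.EqOn f g s) :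
    Set.EqOn (lap f) (lap g) s := fun x hx => by
  show Dd 1 (Dd 1 f) x + Dd Complex.I (Dd Complex.I f) x
    = Dd 1 (Dd 1 g) x + Dd Complex.I (Dd Complex.I g) x
  rw [Dd_congr_on hs (Dd_congr_on hs h 1) 1 hx,
    Dd_congr_on hs (Dd_congr_on hs h Complex.I) Complex.I hx]

lemma lapC_analyticOnNhd {f : ℂ → ℂ} {s : Set ℂ} (hf : AnalyticOnNhd ℝ f s) :
    AnalyticOnNhd ℝ (lapC f) s :=
  (Dd_analyticOnNhd (Dd_analyticOnNhd hf 1) 1).add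
    (Dd_analyticOnNhd (Dd_analyticOnNhd hf Complex.I) Complex.I)

lemma lapC_iter_analyticOnNhd {f : ℂ → ℂ} {s : Set ℂ} (hf : AnalyticOnNhd ℝ f s) (m : ℕ) :
    AnalyticOnNhd ℝ (lapC^[m] f) s := by
  induction m with
  | zero => exact hf
  | succ m ih => rw [Function.iterate_succ_apply']; exact lapC_analyticOnNhd ih

lemma iterDeriv_analyticOnNhd {f : ℂ → ℂ} {s : Set ℂ} (hf : AnalyticOnNhd ℂ f s) (m : ℕ) :
    AnalyticOnNhd ℂ (deriv^[m] f) s := by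
  induction m with
  | zero => exact hf
  | succ m ih => rw [Function.iterate_succ_apply']; exact ih.deriv

def Mix {ι : Type*} [Fintype ι] (φ ψ : ι → ℂ → ℂ) : ℂ → ℂ :=
  fun y => ∑ j, φ j y * (starRingEnd ℂ) (ψ j y)

lemma mix_analyticOnNhd {ι : Type*} [Fintype ι] {φ ψ : ι → ℂ → ℂ} {s : Set ℂ}
    (hφ : ∀ j, AnalyticOnNhd ℂ (φ j) s) (hψ : ∀ j, AnalyticOnNhd ℂ (ψ j) s) :
    AnalyticOnNhd ℝ (Mix φ ψ) s := by
  apply Finset.analyticOnNhd_fun_sum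
  intro j _
  exact fun x hx => ((hφ j x hx).restrictScalars).mul (conjComp ((hψ j x hx).restrictScalars))

lemma Dd_mix {ι : Type*} [Fintype ι] {φ ψ : ι → ℂ → ℂ} {s : Set ℂ} (hs : IsOpen s)
    (hφ : ∀ j, AnalyticOnNhd ℂ (φ j) s) (hψ : ∀ j, AnalyticOnNhd ℂ (ψ j) s) (w : ℂ) :
    Set.EqOn (Dd w (Mix φ ψ))
      (Mix (Sum.elim (fun j y => w * deriv (φ j) y) φ)
           (Sum.elim ψ (fun j y => w * deriv (ψ j) y))) s := by
  intro x hx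
  have hmul : ∀ j : ι, HasFDerivAt (fun y => φ j y * (starRingEnd ℂ) (ψ j y))
      ((φ j x) • ((Complex.conjCLE.toContinuousLinearMap).comp
          ((ContinuousLinearMap.smulRight (1 : ℂ →L[ℂ] ℂ) (deriv (ψ j) x)).restrictScalars ℝ))
        + ((starRingEnd ℂ) (ψ j x)) •
          ((ContinuousLinearMap.smulRight (1 : ℂ →L[ℂ] ℂ) (deriv (φ j) x)).restrictScalars ℝ)) x := by
    intro j
    exact (((hφ j x hx).differentiableAt.hasDerivAt.hasFDerivAt).restrictScalars ℝ).mul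
      ((Complex.conjCLE.toContinuousLinearMap.hasFDerivAt).comp x
        (((hψ j x hx).differentiableAt.hasDerivAt.hasFDerivAt).restrictScalars ℝ))
  have hsum := HasFDerivAt.fun_sum (fun j (_ : j ∈ Finset.univ) => hmul j)
  show fderiv ℝ (fun y => ∑ i : ι, φ i y * (starRingEnd ℂ) (ψ i y)) x w = _
  rw [hsum.fderiv]
  simp only [ContinuousLinearMap.coe_sum', Finset.sum_apply, ContinuousLinearMap.add_apply,
    ContinuousLinearMap.smul_apply, ContinuousLinearMap.coe_comp', Function.comp_apply,
    ContinuousLinearMap.coe_restrictScalars', ContinuousLinearMap.smulRight_apply,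
    ContinuousLinearMap.one_apply, ContinuousLinearEquiv.coe_coe, Complex.conjCLE_apply,
    smul_eq_mul, Mix, Fintype.sum_sum_type, ContinuousLinearMap.toSpanSingleton_apply, Sum.elim_inl, Sum.elim_inr]
  rw [← Finset.sum_add_distrib]
  refine Finset.sum_congr rfl fun j _ => ?_
  simp only [map_mul]
  ring

lemma lapC_mix {ι : Type*} [Fintype ι] {φ ψ : ι → ℂ → ℂ} {s : Set ℂ} (hs : IsOpen s)
    (hφ : ∀ j, AnalyticOnNhd ℂ (φ j) s) (hψ : ∀ j, AnalyticOnNhd ℂ (ψ j) s) :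
    Set.EqOn (lapC (Mix φ ψ))
      (Mix (fun j y => 4 * deriv (φ j) y) (fun j => deriv (ψ j))) s := by
  intro x hx
  have A : ∀ w : ℂ, Dd w (Dd w (Mix φ ψ)) x
      = (∑ j, (w * (w * deriv (deriv (φ j)) x)) * (starRingEnd ℂ) (ψ j x)
        + ∑ j, (w * deriv (φ j) x) * (starRingEnd ℂ) (w * deriv (ψ j) x))
        + (∑ j, (w * deriv (φ j) x) * (starRingEnd ℂ) (w * deriv (ψ j) x)
        + ∑ j, φ j x * (starRingEnd ℂ) (w * (w * deriv (deriv (ψ j)) x))) := by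
    intro w
    have hΦ : ∀ i : ι ⊕ ι, AnalyticOnNhd ℂ
        ((Sum.elim (fun j y => w * deriv (φ j) y) φ) i) s := by
      rintro (j | j)
      · exact analyticOnNhd_const.mul ((hφ j).deriv)
      · exact hφ j
    have hΨ : ∀ i : ι ⊕ ι, AnalyticOnNhd ℂ
        ((Sum.elim ψ (fun j y => w * deriv (ψ j) y)) i) s := by
      rintro (j | j)
      · exact hψ j
      · exact analyticOnNhd_const.mul ((hψ j).deriv)
    have e1 := Dd_congr_on hs (Dd_mix hs hφ hψ w) w hx
    rw [e1, Dd_mix hs hΦ hΨ w hx]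
    have d1 : ∀ j : ι, deriv (fun y => w * deriv (φ j) y) x = w * deriv (deriv (φ j)) x :=
      fun j => deriv_const_mul w (((hφ j).deriv) x hx).differentiableAt
    have d2 : ∀ j : ι, deriv (fun y => w * deriv (ψ j) y) x = w * deriv (deriv (ψ j)) x :=
      fun j => deriv_const_mul w (((hψ j).deriv) x hx).differentiableAt
    simp only [Mix, Fintype.sum_sum_type, Sum.elim_inl, Sum.elim_inr, d1, d2]
  show Dd 1 (Dd 1 (Mix φ ψ)) x + Dd Complex.I (Dd Complex.I (Mix φ ψ)) x = _
  rw [A 1, A Complex.I]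
  simp only [Mix]
  rw [← Finset.sum_add_distrib, ← Finset.sum_add_distrib, ← Finset.sum_add_distrib,
    ← Finset.sum_add_distrib, ← Finset.sum_add_distrib, ← Finset.sum_add_distrib,
    ← Finset.sum_add_distrib]
  refine Finset.sum_congr rfl fun j _ => ?_
  simp only [map_mul, Complex.conj_I, map_one]
  ring_nf
  simp only [Complex.I_sq]
  ring

lemma lapC_iter_mix {ι : Type*} [Fintype ι] {φ ψ : ι → ℂ → ℂ} {s : Set ℂ} (hs : IsOpen s)
    (hφ : ∀ j, AnalyticOnNhd ℂ (φ j) s) (hψ : ∀ j, AnalyticOnNhd ℂ (ψ j) s) (m : ℕ) :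
    Set.EqOn (lapC^[m] (Mix φ ψ))
      (Mix (fun j y => (4:ℂ)^m * deriv^[m] (φ j) y) (fun j y => deriv^[m] (ψ j) y)) s := by
  induction m with
  | zero =>
    intro x hx
    simp [Mix]
  | succ m ih =>
    intro x hx
    rw [Function.iterate_succ_apply', lapC_congr_on hs ih hx]
    have hφm : ∀ j, AnalyticOnNhd ℂ (fun y => (4:ℂ)^m * deriv^[m] (φ j) y) s := fun j =>
      analyticOnNhd_const.mul (iterDeriv_analyticOnNhd (hφ j) m)
    have hψm : ∀ j, AnalyticOnNhd ℂ (fun y => deriv^[m] (ψ j) y) s := fun j =>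
      iterDeriv_analyticOnNhd (hψ j) m
    rw [lapC_mix hs hφm hψm hx]
    simp only [Mix]
    refine Finset.sum_congr rfl fun j _ => ?_
    have dφ : deriv (fun y => (4:ℂ)^m * deriv^[m] (φ j) y) x
        = (4:ℂ)^m * deriv (deriv^[m] (φ j)) x :=
      deriv_const_mul _ ((iterDeriv_analyticOnNhd (hφ j) m) x hx).differentiableAt
    rw [dφ, Function.iterate_succ_apply', Function.iterate_succ_apply']
    ring_nf

/-! ### Real parts -/

lemma Dd_re {G : ℂ → ℂ} {s : Set ℂ} (hG : AnalyticOnNhd ℝ G s) (w : ℂ) :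
    Set.EqOn (Dd w (fun y => (G y).re)) (fun y => (Dd w G y).re) s := fun x hx => by
  have h2 : fderiv ℝ (fun y => (G y).re) x = Complex.reCLM.comp (fderiv ℝ G x) :=
    HasFDerivAt.fderiv
      (by exact Complex.reCLM.hasFDerivAt.comp x ((hG x hx).differentiableAt.hasFDerivAt))
  show fderiv ℝ (fun y => (G y).re) x w = _
  rw [h2]
  rfl

lemma lap_re {G : ℂ → ℂ} {s : Set ℂ} (hs : IsOpen s) (hG : AnalyticOnNhd ℝ G s) :
    Set.EqOn (lap (fun y => (G y).re)) (fun y => (lapC G y).re) s := fun x hx => by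
  show Dd 1 (Dd 1 (fun y => (G y).re)) x + Dd Complex.I (Dd Complex.I (fun y => (G y).re)) x = _
  rw [Dd_congr_on hs (Dd_re hG 1) 1 hx, Dd_congr_on hs (Dd_re hG Complex.I) Complex.I hx,
    Dd_re (Dd_analyticOnNhd hG 1) 1 hx, Dd_re (Dd_analyticOnNhd hG Complex.I) Complex.I hx]
  simp [lapC]

lemma lap_iter_re {G : ℂ → ℂ} {s : Set ℂ} (hs : IsOpen s) (hG : AnalyticOnNhd ℝ G s) (m : ℕ) :
    Set.EqOn (lap^[m] (fun y => (G y).re)) (fun y => ((lapC^[m] G) y).re) s := by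
  induction m with
  | zero => intro x hx; rfl
  | succ m ih =>
    intro x hx
    rw [Function.iterate_succ_apply', Function.iterate_succ_apply',
      lap_congr_on hs ih hx, lap_re hs (lapC_iter_analyticOnNhd hG m) hx]

/-! ### Iterated derivatives of factored germs -/

lemma deriv_factor {a h : ℂ → ℂ} (ha : AnalyticAt ℂ a 0) (k : ℕ)
    (hh : h =ᶠ[𝓝 0] fun t => t ^ (k+1) * a t) :
    deriv h =ᶠ[𝓝 0] fun t => t ^ k * (((k:ℂ)+1) * a t + t * deriv a t) := by
  filter_upwards [hh.deriv, ha.eventually_analyticAt] with y h1 h2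
  rw [h1, (((hasDerivAt_pow (k+1) y)).fun_mul h2.differentiableAt.hasDerivAt).deriv]
  simp only [Nat.add_sub_cancel]
  push_cast
  ring

lemma iter_deriv_factor : ∀ (k : ℕ) {h a : ℂ → ℂ}, AnalyticAt ℂ a 0 →
    (h =ᶠ[𝓝 0] fun t => t ^ k * a t) → deriv^[k] h 0 = (k.factorial : ℂ) * a 0 := by
  intro k
  induction k with
  | zero => intro h a _ hh; simpa using hh.eq_of_nhds
  | succ k ih =>
    intro h a ha hh
    have hd := deriv_factor ha k hh
    have ha' : AnalyticAt ℂ (fun t => ((k:ℂ)+1) * a t + t * deriv a t) 0 :=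
      (analyticAt_const.mul ha).add (analyticAt_id.mul (analyticAt_deriv ha))
    rw [Function.iterate_succ_apply, ih ha' hd]
    simp [Nat.factorial_succ]
    push_cast
    ring

end PSAux


/-- A sum of squared moduli of holomorphic functions vanishing at `0`
satisfies property PS. -/
theorem sum_sq_abs_holomorphic_satisfies_PS {n K : ℕ}
    (f : Fin K → (Fin n → ℂ) → ℂ)
    (hf : ∃ U ∈ 𝓝 (0 : Fin n → ℂ), ∀ j, DifferentiableOn ℂ (f j) U)
    (hf0 : ∀ j, f j 0 = 0) :
    PropertyPS (fun x => ∑ j, Complex.normSq (f j x)) := by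
  classical
  intro z hz hz0 _ N hvanish
  obtain ⟨U, hU, hUdiff⟩ := hf
  set h : Fin K → ℂ → ℂ := fun j t => f j (z t) with hh
  set u : ℂ → ℝ := fun t => ∑ j, Complex.normSq (f j (z t)) with hudef
  have hvan : VanishExactly u N := hvanish
  -- an open neighbourhood of 0 where everything is analytic
  obtain ⟨E, hE, hEopen, hE0⟩ := eventually_nhds_iff.mp hz
  set s : Set ℂ := E ∩ z ⁻¹' (interior U) with hsdef
  have hsopen : IsOpen s :=
    ContinuousOn.isOpen_inter_preimage
      (fun t ht => ((hE t ht).continuousAt).continuousWithinAt) hEopen isOpen_interior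
  have h0s : (0 : ℂ) ∈ s := by
    refine ⟨hE0, ?_⟩
    show z 0 ∈ interior U
    rw [hz0]
    exact mem_interior_iff_mem_nhds.mpr hU
  have hanal : ∀ j, AnalyticOnNhd ℂ (h j) s := by
    intro j
    apply DifferentiableOn.analyticOnNhd _ hsopen
    intro t ht
    exact (((hUdiff j).differentiableAt
      (mem_interior_iff_mem_nhds.mp ht.2)).comp t (hE t ht.1)).differentiableWithinAt
  have hu_eq : u = fun y => (PSAux.Mix h h y).re := by
    funext t
    simp only [hudef, PSAux.Mix]
    rw [Complex.re_sum]
    refine Finset.sum_congr rfl fun j _ => ?_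
    rw [Complex.mul_conj]
    simp [hh]
  by_cases hall : ∀ j, ∀ᶠ t in 𝓝 (0:ℂ), h j t = 0
  · -- all curve components vanish identically: contradiction with `VanishExactly`
    exfalso
    apply hvan.2
    have hu0 : u =ᶠ[𝓝 (0:ℂ)] fun _ => (0:ℝ) := by
      filter_upwards [Filter.eventually_all.mpr hall] with t ht
      show u t = 0
      rw [hudef]
      exact Finset.sum_eq_zero fun j _ => by
        rw [show f j (z t) = 0 from ht j]; simp
    have heq : iteratedFDeriv ℝ N u 0 = iteratedFDeriv ℝ N (fun _ => (0:ℝ)) 0 := by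
      rw [← iteratedFDerivWithin_univ, ← iteratedFDerivWithin_univ]
      exact Filter.EventuallyEq.iteratedFDerivWithin_eq
        (hu0.filter_mono nhdsWithin_le_nhds) (hu0.eq_of_nhds) N
    rw [heq, iteratedFDeriv_zero_fun]
    rfl
  · -- the main case
    obtain ⟨j₁, hj₁⟩ := not_forall.mp hall
    have hAat : ∀ j, AnalyticAt ℂ (h j) 0 := fun j => hanal j 0 h0s
    have hPex : ∃ m : ℕ, ∃ j, analyticOrderAt (h j) 0 = (m : ℕ∞) := by
      have hne : analyticOrderAt (h j₁) 0 ≠ ⊤ :=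
        fun hEq => hj₁ (analyticOrderAt_eq_top.mp hEq)
      obtain ⟨m, hm⟩ := WithTop.ne_top_iff_exists.mp hne
      exact ⟨m, j₁, hm.symm⟩
    set k := sInf {m : ℕ | ∃ j, analyticOrderAt (h j) 0 = (m : ℕ∞)} with hkdef
    obtain ⟨j₀, hj₀⟩ : ∃ j, analyticOrderAt (h j) 0 = (k : ℕ∞) := Nat.sInf_mem hPex
    -- factor every curve component as t^k * (analytic)
    have hfact : ∀ j, ∃ a, AnalyticAt ℂ a 0 ∧ h j =ᶠ[𝓝 0] fun t => t ^ k * a t := by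
      intro j
      rcases eq_or_ne (analyticOrderAt (h j) 0) ⊤ with ho | ho
      · refine ⟨fun _ => 0, analyticAt_const, ?_⟩
        filter_upwards [analyticOrderAt_eq_top.mp ho] with t ht
        simp [ht]
      · obtain ⟨m, hm⟩ := WithTop.ne_top_iff_exists.mp ho
        obtain ⟨g, hg, hg0, hfac⟩ := (hAat j).analyticOrderAt_eq_natCast.mp hm.symm
        have hkm : k ≤ m := Nat.sInf_le ⟨j, hm.symm⟩
        refine ⟨fun t => t ^ (m - k) * g t, (analyticAt_id.pow _).mul hg, ?_⟩
        filter_upwards [hfac] with t ht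
        rw [ht, sub_zero, smul_eq_mul, ← mul_assoc, ← pow_add, Nat.add_sub_cancel' hkm]
    choose a hAa hFac using hfact
    -- the minimal-order component has nonvanishing k-th derivative at 0
    obtain ⟨g₀, hg₀, hg00, hfac₀⟩ := (hAat j₀).analyticOrderAt_eq_natCast.mp hj₀
    have hderiv₀ : deriv^[k] (h j₀) 0 = (k.factorial : ℂ) * g₀ 0 := by
      apply PSAux.iter_deriv_factor k hg₀
      filter_upwards [hfac₀] with t ht
      rw [ht, sub_zero, smul_eq_mul]
    have hderiv₀_ne : deriv^[k] (h j₀) 0 ≠ 0 := by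
      rw [hderiv₀]
      exact mul_ne_zero (Nat.cast_ne_zero.mpr k.factorial_ne_zero) hg00
    -- computation of the iterated Laplacian
    have hUanal : AnalyticOnNhd ℝ (PSAux.Mix h h) s := PSAux.mix_analyticOnNhd hanal hanal
    have hlapval : lap^[k] u 0 = ∑ j, (4:ℝ)^k * Complex.normSq (deriv^[k] (h j) 0) := by
      rw [hu_eq, PSAux.lap_iter_re hsopen hUanal k h0s]
      show (PSAux.lapC^[k] (PSAux.Mix h h) 0).re = _
      rw [PSAux.lapC_iter_mix hsopen hanal hanal k h0s]
      simp only [PSAux.Mix]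
      rw [Complex.re_sum]
      refine Finset.sum_congr rfl fun j _ => ?_
      rw [mul_assoc, Complex.mul_conj,
        show ((4:ℂ)^k) = (((4:ℝ)^k : ℝ) : ℂ) by push_cast; ring,
        ← Complex.ofReal_mul, Complex.ofReal_re]
    have hpos : 0 < lap^[k] u 0 := by
      rw [hlapval]
      apply Finset.sum_pos'
      · intro j _
        exact mul_nonneg (by positivity) (Complex.normSq_nonneg _)
      · refine ⟨j₀, Finset.mem_univ _, ?_⟩
        exact mul_pos (by positivity) (Complex.normSq_pos.mpr hderiv₀_ne)
    -- vanishing of low-order jets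
    have hGood : PSAux.Good (2*k) (PSAux.Mix h h) := by
      apply PSAux.Good.sum (fun j t => h j t * (starRingEnd ℂ) (h j t))
      intro j
      refine PSAux.Good.term _ k k (a j) (a j) (hAa j) (hAa j) (by omega) _ ?_
      filter_upwards [hFac j] with t ht
      simp only [PSAux.model]
      rw [ht]
    have hjets : ∀ l, l < 2*k → iteratedFDeriv ℝ l u 0 = 0 := by
      intro l hl
      have hU0 : iteratedFDeriv ℝ l (PSAux.Mix h h) 0 = 0 := by
        ext m
        rw [PSAux.iteratedFDeriv_eq_DdL hsopen l _ hUanal 0 h0s m]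
        have := hGood.ddL_zero (List.ofFn m) (by simpa using hl)
        simpa using this
      have hcd : ContDiffOn ℝ (l : ℕ∞) (PSAux.Mix h h) s :=
        hUanal.contDiffOn hsopen.uniqueDiffOn
      have hfun : u = (⇑Complex.reCLM ∘ PSAux.Mix h h) := by rw [hu_eq]; rfl
      rw [hfun, ← iteratedFDerivWithin_of_isOpen l hsopen h0s,
        Complex.reCLM.iteratedFDerivWithin_comp_left (hcd 0 h0s) hsopen.uniqueDiffOn h0s le_rfl,
        iteratedFDerivWithin_of_isOpen l hsopen h0s, hU0]
      ext m
      simp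
    have hlow : 2*k ≤ N := by
      by_contra hlt
      exact hvan.2 (hjets N (by omega))
    have huanal : AnalyticOnNhd ℝ u s := by
      rw [hu_eq]
      exact Complex.reCLM.comp_analyticOnNhd hUanal
    have hhigh : N ≤ 2*k := by
      by_contra hgt
      push_neg at hgt
      have h0 : lap^[k] u 0 = 0 := by
        apply PSAux.lap_iterate_eq_zero hsopen h0s k u huanal
        intro ws hws
        have e : PSAux.DdL ws u 0 = iteratedFDeriv ℝ ws.length u 0 ws.get := by
          rw [PSAux.iteratedFDeriv_eq_DdL hsopen ws.length u huanal 0 h0s ws.get,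
            List.ofFn_get]
        rw [e, hvan.1 ws.length (by omega)]
        rfl
      exact absurd h0 (ne_of_gt hpos)
    exact ⟨k, by omega, hpos⟩

end
end

section
/- Define r:ℂ³→ℝ by r(z) = 2Re(z₃) + |z₁² − z₂³|², and let (M,0) be the germ of the real hypersurface {r = 0} at 0. Then: (i) for every holomorphic germ η:(ℂ,0)→(ℂ³,0) with η(0)=0 and η'(0)≠0, the composite r∘η vanishes to order at most 6 at 0; and (ii) for η(t) = (0,t,0) one has r(η(t)) = |t|⁶, which vanishes to order exactly 6. Hence the regular order of contact satisfies Δ₁^reg(M,0) = 6. -/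
open Topology Filter Complex
open scoped ENNReal

noncomputable section

section AuxLemmas

open Asymptotics

private lemma isBigO_of_iFD_zero {E F : Type*} [NormedAddCommGroup E] [NormedSpace ℝ E]
    [NormedAddCommGroup F] [NormedSpace ℝ F] [CompleteSpace F] {u : E → F}
    (hu : AnalyticAt ℝ u 0) (n : ℕ) (h : ∀ j, j < n → iteratedFDeriv ℝ j u 0 = 0) :
    u =O[𝓝 (0 : E)] fun t => ‖t‖ ^ n := by
  obtain ⟨p, hp⟩ := hu
  have hps : (fun y : E => u (0 + y) - p.partialSum n y) =O[𝓝 0] fun y => ‖y‖ ^ n :=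
    hp.isBigO_sub_partialSum_pow n
  have hzero : ∀ y : E, p.partialSum n y = 0 := by
    intro y
    apply Finset.sum_eq_zero
    intro j hj
    obtain ⟨r, hpr⟩ := hp
    have h1 := hpr.factorial_smul y j
    rw [h j (Finset.mem_range.mp hj)] at h1
    have h2 : (j.factorial : ℝ) • p j (fun _ => y) = 0 := by
      rw [Nat.cast_smul_eq_nsmul]; simpa using h1
    exact (smul_eq_zero.mp h2).resolve_left (by exact_mod_cast j.factorial_ne_zero)
  exact hps.congr' (Eventually.of_forall fun y => by simp [hzero])
    EventuallyEq.rfl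

private lemma fderivR_zero {u : ℂ → ℂ} (hd : DifferentiableAt ℂ u 0) (h1 : deriv u 0 = 0) :
    fderiv ℝ u 0 = 0 := by
  have h := (hd.hasDerivAt.hasFDerivAt.restrictScalars ℝ).fderiv
  rw [h1] at h
  rw [h]; ext v; simp

private lemma cAnal_bigO_one {u : ℂ → ℂ} (hu : AnalyticAt ℂ u 0) (h0 : u 0 = 0) :
    u =O[𝓝 (0:ℂ)] fun t => ‖t‖ := by
  have := isBigO_of_iFD_zero hu.restrictScalars 1 (by
    intro j hj
    interval_cases j
    · ext m; simp [h0])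
  simpa using this

private lemma cAnal_bigO_two {u : ℂ → ℂ} (hu : AnalyticAt ℂ u 0) (h0 : u 0 = 0)
    (h1 : deriv u 0 = 0) : u =O[𝓝 (0:ℂ)] fun t => ‖t‖ ^ 2 := by
  apply isBigO_of_iFD_zero hu.restrictScalars 2
  intro j hj
  interval_cases j
  · ext m; simp [h0]
  · ext m; rw [iteratedFDeriv_one_apply, fderivR_zero hu.differentiableAt h1]; simp

private lemma lower_of_bigO {g : ℂ → ℂ} {c : ℂ} {m : ℕ} (hc : c ≠ 0)
    (h : (fun t => g t - c * t ^ m) =O[𝓝 (0:ℂ)] fun t => ‖t‖ ^ (m + 1)) :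
    ∀ᶠ t in 𝓝 (0:ℂ), ‖c‖ / 2 * ‖t‖ ^ m ≤ ‖g t‖ := by
  obtain ⟨C, hC⟩ := h.bound
  have hcpos : (0:ℝ) < ‖c‖ := norm_pos_iff.mpr hc
  have hCpos : (0:ℝ) < |C| + 1 := by positivity
  have htend : Tendsto (fun t : ℂ => ‖t‖) (𝓝 0) (𝓝 0) := by
    simpa using (continuous_norm.tendsto (0:ℂ))
  have hball : ∀ᶠ t in 𝓝 (0:ℂ), ‖t‖ < ‖c‖ / (2 * (|C| + 1)) :=
    htend.eventually_lt_const (by positivity)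
  filter_upwards [hC, hball] with t h1 h2
  have hnt : (0:ℝ) ≤ ‖t‖ := norm_nonneg t
  have key : ‖g t - c * t ^ m‖ ≤ ‖c‖ / 2 * ‖t‖ ^ m := by
    calc ‖g t - c * t ^ m‖ ≤ C * ‖‖t‖ ^ (m+1)‖ := h1
    _ ≤ |C| * ‖t‖ ^ (m+1) := by
        have he : ‖‖t‖ ^ (m+1)‖ = ‖t‖ ^ (m+1) := by
          rw [Real.norm_eq_abs, _root_.abs_of_nonneg (by positivity)]
        rw [he]
        exact mul_le_mul_of_nonneg_right (le_abs_self C) (by positivity)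
    _ = (|C| * ‖t‖) * ‖t‖ ^ m := by ring
    _ ≤ ‖c‖ / 2 * ‖t‖ ^ m := by
        apply mul_le_mul_of_nonneg_right ?_ (by positivity)
        have := h2.le
        calc |C| * ‖t‖ ≤ (|C| + 1) * ‖t‖ := by nlinarith
        _ ≤ (|C| + 1) * (‖c‖ / (2 * (|C| + 1))) := by
            exact mul_le_mul_of_nonneg_left this (by positivity)
        _ = ‖c‖ / 2 := by field_simp
  have h3 : ‖c * t ^ m‖ - ‖g t - c * t ^ m‖ ≤ ‖g t‖ := by
    have hx := norm_sub_norm_le (c * t ^ m) (c * t ^ m - g t)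
    simp only [sub_sub_cancel] at hx
    calc ‖c * t ^ m‖ - ‖g t - c * t ^ m‖
        = ‖c * t ^ m‖ - ‖c * t ^ m - g t‖ := by rw [norm_sub_rev]
    _ ≤ ‖g t‖ := hx
  have h4 : ‖c * t ^ m‖ = ‖c‖ * ‖t‖ ^ m := by
    rw [norm_mul, norm_pow]
  nlinarith [pow_nonneg hnt m, key, h3]

private lemma path_tendsto (ω : ℂ) :
    Tendsto (fun ε : ℝ => (ε:ℂ) * ω) (𝓝[>] 0) (𝓝 0) := by
  have hcont : Continuous (fun ε : ℝ => (ε:ℂ) * ω) := by continuity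
  have h := hcont.tendsto 0
  simp only [Complex.ofReal_zero, zero_mul] at h
  exact h.mono_left nhdsWithin_le_nhds

private lemma exists_ray {c : ℂ → ℂ} (hc : AnalyticAt ℂ c 0) (h0 : c 0 = 0) :
    ∃ ω : ℂ, ω ≠ 0 ∧ ∀ᶠ ε in 𝓝[>] (0:ℝ), 0 ≤ (c (Complex.ofReal ε * ω)).re := by
  by_cases htop : ∀ᶠ z in 𝓝 (0:ℂ), c z = 0
  · refine ⟨1, one_ne_zero, ?_⟩
    filter_upwards [(path_tendsto 1).eventually htop] with ε hε
    rw [hε]; simp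
  · have hord : analyticOrderAt c 0 ≠ ⊤ := fun hh => htop ((analyticOrderAt_eq_top).mp hh)
    obtain ⟨k, hk⟩ : ∃ k : ℕ, analyticOrderAt c 0 = k := by
      obtain ⟨k, hk⟩ := WithTop.ne_top_iff_exists.mp hord
      exact ⟨k, hk.symm⟩
    obtain ⟨h, hhA, hh0, hck⟩ := (hc.analyticOrderAt_eq_natCast (n := k)).mp hk
    have hk1 : 0 < k := by
      rcases Nat.eq_zero_or_pos k with h0' | h1
      · exfalso; subst h0'
        have hsel := hck.self_of_nhds
        simp only [sub_zero, pow_zero, one_smul] at hsel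
        rw [h0] at hsel
        exact hh0 hsel.symm
      · exact h1
    obtain ⟨ω, hωk⟩ := IsAlgClosed.exists_pow_nat_eq (starRingEnd ℂ (h 0)) hk1
    have hω : ω ≠ 0 := by
      intro h'
      rw [h', zero_pow (by omega)] at hωk
      apply hh0
      have := congrArg (starRingEnd ℂ) hωk.symm
      simpa using this
    refine ⟨ω, hω, ?_⟩
    have hcomp : Tendsto (fun ε : ℝ => h ((ε:ℂ) * ω)) (𝓝[>] 0) (𝓝 (h 0)) :=
      hhA.continuousAt.tendsto.comp (path_tendsto ω)
    have hcont : Tendsto (fun ε : ℝ => (ω ^ k * h ((ε:ℂ) * ω)).re) (𝓝[>] 0)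
        (𝓝 ((ω ^ k * h 0).re)) :=
      (Complex.continuous_re.tendsto _).comp (tendsto_const_nhds.mul hcomp)
    have hval : (ω ^ k * h 0).re = Complex.normSq (h 0) := by
      rw [hωk, mul_comm, Complex.mul_conj]
      simp
    have hpos : ∀ᶠ ε in 𝓝[>] (0:ℝ), 0 < (ω ^ k * h (Complex.ofReal ε * ω)).re := by
      apply hcont.eventually_const_lt
      rw [hval]
      exact Complex.normSq_pos.mpr hh0
    filter_upwards [hpos, (path_tendsto ω).eventually hck, self_mem_nhdsWithin]
      with ε h1 h2 h3
    rw [h2]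
    simp only [sub_zero, smul_eq_mul]
    have heq : ((ε:ℂ) * ω) ^ k * h ((ε:ℂ) * ω)
        = ((ε ^ k : ℝ) : ℂ) * (ω ^ k * h ((ε:ℂ) * ω)) := by
      push_cast; ring
    rw [heq, Complex.re_ofReal_mul]
    have hε : (0:ℝ) < ε := h3
    exact mul_nonneg (pow_nonneg hε.le k) h1.le

private lemma final_contra {f : ℂ → ℝ} {c : ℂ → ℂ} {g : ℂ → ℂ}
    (hfg : ∀ t, f t = 2 * (c t).re + Complex.normSq (g t))
    (hO : f =O[𝓝 (0:ℂ)] fun t => ‖t‖ ^ 7) {d : ℝ} (hd : 0 < d) {m : ℕ}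
    (hm : 2 * m + 1 ≤ 7)
    (hg : ∀ᶠ t in 𝓝 (0:ℂ), d * ‖t‖ ^ m ≤ ‖g t‖)
    {ω : ℂ} (hω : ω ≠ 0)
    (hray : ∀ᶠ ε in 𝓝[>] (0:ℝ), 0 ≤ (c (Complex.ofReal ε * ω)).re) : False := by
  obtain ⟨C, hC⟩ := hO.bound
  set s := ‖ω‖ with hs
  have hspos : 0 < s := norm_pos_iff.mpr hω
  have htends : Tendsto (fun ε : ℝ => ε * s) (𝓝[>] 0) (𝓝 0) := by
    have hcont : Continuous fun ε : ℝ => ε * s := by continuity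
    have h := hcont.tendsto 0
    simp only [zero_mul] at h
    exact h.mono_left nhdsWithin_le_nhds
  have hsmall1 : ∀ᶠ ε in 𝓝[>] (0:ℝ), ε * s < 1 := htends.eventually_lt_const one_pos
  have hsmall2 : ∀ᶠ ε in 𝓝[>] (0:ℝ), |C| * (ε * s) < d ^ 2 := by
    have h0' : Tendsto (fun ε : ℝ => |C| * (ε * s)) (𝓝[>] 0) (𝓝 0) := by
      simpa using htends.const_mul |C|
    exact h0'.eventually_lt_const (by positivity)
  obtain ⟨ε, hε1, hε2, hε3, hε4, hε5, hε6⟩ :=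
    (((path_tendsto ω).eventually hC).and ((((path_tendsto ω).eventually hg).and
      (hray.and (hsmall1.and (hsmall2.and self_mem_nhdsWithin)))))).exists
  have hεpos : (0:ℝ) < ε := hε6
  set x := ε * s with hx
  have hxpos : 0 < x := by positivity
  have hnorm : ‖(ε:ℂ) * ω‖ = x := by
    rw [norm_mul, Complex.norm_real, Real.norm_eq_abs, _root_.abs_of_pos hεpos]
  rw [hnorm] at hε1 hε2
  set t := (ε:ℂ) * ω with htdef
  have k1 : d ^ 2 * x ^ (2 * m) ≤ Complex.normSq (g t) := by
    have hsq : (d * x ^ m) ^ 2 ≤ ‖g t‖ ^ 2 :=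
      pow_le_pow_left₀ (by positivity) hε2 2
    have heq2 : (d * x ^ m) ^ 2 = d ^ 2 * x ^ (2 * m) := by
      rw [mul_pow, ← pow_mul, mul_comm m 2]
    rw [heq2] at hsq
    calc d ^ 2 * x ^ (2 * m) ≤ ‖g t‖ ^ 2 := hsq
    _ = Complex.normSq (g t) := by rw [← Complex.normSq_eq_norm_sq]
  have k2 : Complex.normSq (g t) ≤ f t := by
    rw [hfg t]
    have := hε3
    linarith
  have k3 : f t ≤ |C| * x ^ 7 := by
    have h1 : f t ≤ |f t| := le_abs_self _
    have h2 : |f t| = ‖f t‖ := (Real.norm_eq_abs _).symm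
    have h3 : ‖f t‖ ≤ C * ‖x ^ 7‖ := hε1
    have h4 : C * ‖x ^ 7‖ ≤ |C| * x ^ 7 := by
      rw [Real.norm_eq_abs, _root_.abs_of_nonneg (by positivity : (0:ℝ) ≤ x ^ 7)]
      exact mul_le_mul_of_nonneg_right (le_abs_self C) (by positivity)
    linarith
  have k4 : |C| * x ^ 7 ≤ |C| * (x ^ (2 * m) * x) := by
    apply mul_le_mul_of_nonneg_left ?_ (abs_nonneg C)
    have h7 : x ^ 7 ≤ x ^ (2 * m + 1) :=
      pow_le_pow_of_le_one hxpos.le hε4.le (by omega)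
    rw [pow_succ] at h7
    exact h7
  have k5 : |C| * (x ^ (2 * m) * x) < d ^ 2 * x ^ (2 * m) := by
    have hmul := mul_lt_mul_of_pos_right hε5 (show (0:ℝ) < x ^ (2*m) by positivity)
    calc |C| * (x ^ (2 * m) * x) = |C| * (ε * s) * x ^ (2 * m) := by rw [hx]; ring
    _ < d ^ 2 * x ^ (2 * m) := hmul
  linarith

private noncomputable def u0 : ℂ → ℝ := fun t => Complex.normSq t ^ 3

private lemma u0_contDiff : ContDiff ℝ ((⊤:ℕ∞) : WithTop ℕ∞) u0 := by
  unfold u0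
  simp only [Complex.normSq_apply]
  have hre : ContDiff ℝ (⊤:ℕ∞) fun t : ℂ => t.re := Complex.reCLM.contDiff
  have him : ContDiff ℝ (⊤:ℕ∞) fun t : ℂ => t.im := Complex.imCLM.contDiff
  exact ((hre.mul hre).add (him.mul him)).pow 3

private lemma u0_analyticAt : AnalyticAt ℝ u0 0 := by
  unfold u0
  simp only [Complex.normSq_apply]
  have hre : AnalyticAt ℝ (fun t : ℂ => t.re) 0 := Complex.reCLM.analyticAt 0
  have him : AnalyticAt ℝ (fun t : ℂ => t.im) 0 := Complex.imCLM.analyticAt 0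
  exact (((hre.mul hre).add (him.mul him)).pow 3)

private lemma u0_vanish_lt6 : ∀ j, j < 6 → iteratedFDeriv ℝ j u0 0 = 0 := by
  intro j hj
  set L : ℂ →L[ℝ] ℂ := (2:ℝ) • (ContinuousLinearMap.id ℝ ℂ) with hL
  have hcomp := L.iteratedFDeriv_comp_right u0_contDiff 0 (i := j) (by exact_mod_cast le_top)
  have huL : u0 ∘ L = (64:ℝ) • u0 := by
    funext t
    show u0 ((2:ℝ) • t) = (64:ℝ) * u0 t
    unfold u0
    rw [Complex.real_smul, map_mul Complex.normSq]
    have h4 : Complex.normSq ((2:ℝ):ℂ) = 4 := by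
      rw [Complex.normSq_ofReal]; norm_num
    rw [h4]; ring
  ext v
  have h1 : iteratedFDeriv ℝ j (u0 ∘ L) 0 v = (2:ℝ)^j • iteratedFDeriv ℝ j u0 0 v := by
    rw [hcomp, ContinuousMultilinearMap.compContinuousLinearMap_apply]
    have hv : (fun i => L (v i)) = fun i : Fin j => (2:ℝ) • (v i) := rfl
    rw [hv, ContinuousMultilinearMap.map_smul_univ]
    simp [Finset.prod_const]
  have h2 : iteratedFDeriv ℝ j (u0 ∘ L) 0 v = (64:ℝ) • iteratedFDeriv ℝ j u0 0 v := by
    rw [huL, iteratedFDeriv_const_smul_apply (u0_contDiff.contDiffAt.of_le (by exact_mod_cast le_top) : ContDiffAt ℝ j u0 0)]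
    rfl
  have h3 : ((2:ℝ)^j - 64) • iteratedFDeriv ℝ j u0 0 v = 0 := by
    rw [sub_smul, h1.symm.trans h2]
    simp
  have hne : ((2:ℝ)^j - 64) ≠ 0 := by
    interval_cases j <;> norm_num
  simpa [hne] using (smul_eq_zero.mp h3)

private lemma u0_iFD6_ne : iteratedFDeriv ℝ 6 u0 0 ≠ 0 := by
  intro h6
  have hall : ∀ j, j < 7 → iteratedFDeriv ℝ j u0 0 = 0 := by
    intro j hj
    rcases Nat.lt_or_ge j 6 with h | h
    · exact u0_vanish_lt6 j h
    · have hj6 : j = 6 := by omega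
      rw [hj6]; exact h6
  have hO := isBigO_of_iFD_zero u0_analyticAt 7 hall
  obtain ⟨C, hC⟩ := hO.bound
  have htends : Tendsto (fun ε : ℝ => (ε:ℂ)) (𝓝[>] 0) (𝓝 0) := by
    have h := Complex.continuous_ofReal.tendsto 0
    simp only [Complex.ofReal_zero] at h
    exact h.mono_left nhdsWithin_le_nhds
  have hsmall : ∀ᶠ ε in 𝓝[>] (0:ℝ), |C| * ε < 1 := by
    have h0' : Tendsto (fun ε : ℝ => |C| * ε) (𝓝[>] 0) (𝓝 0) := by
      have hcont : Continuous fun ε : ℝ => |C| * ε := by continuity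
      have h := hcont.tendsto 0
      simp only [mul_zero] at h
      exact (h.mono_left nhdsWithin_le_nhds)
    exact h0'.eventually_lt_const one_pos
  obtain ⟨ε, hε1, hε2, hε3⟩ :=
    ((htends.eventually hC).and (hsmall.and self_mem_nhdsWithin)).exists
  have hεpos : (0:ℝ) < ε := hε3
  have hval : u0 ((ε:ℂ)) = ε ^ 6 := by
    unfold u0
    rw [Complex.normSq_ofReal]
    ring
  have hnrm : ‖(ε:ℂ)‖ = ε := by
    rw [Complex.norm_real, Real.norm_eq_abs, _root_.abs_of_pos hεpos]
  rw [hnrm, hval] at hε1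
  have e1 : ‖ε ^ 6‖ = ε ^ 6 := by
    rw [Real.norm_eq_abs, _root_.abs_of_pos (by positivity)]
  have e2 : C * ‖ε ^ 7‖ ≤ |C| * ε ^ 7 := by
    rw [Real.norm_eq_abs, _root_.abs_of_pos (by positivity)]
    exact mul_le_mul_of_nonneg_right (le_abs_self C) (by positivity)
  have e3 : ε ^ 6 ≤ |C| * ε ^ 7 := by
    rw [e1] at hε1; linarith
  have h7 : |C| * ε ^ 7 = (|C| * ε) * ε ^ 6 := by ring
  nlinarith [pow_pos hεpos 6]

end AuxLemmas

private lemma part_one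
    (r : (Fin 3 → ℂ) → ℝ)
    (hr : ∀ z : Fin 3 → ℂ, r z = 2 * (z 2).re + Complex.normSq ((z 0) ^ 2 - (z 1) ^ 3)) :
    ∀ w : ℂ → Fin 3 → ℂ, HoloGerm w → w 0 = 0 → deriv w 0 ≠ 0 →
      nu (fun t => r (w t)) ≤ 6 := by
  intro w hw hw0 hw'
  set a : ℂ → ℂ := fun t => w t 0 with hadef
  set b : ℂ → ℂ := fun t => w t 1 with hbdef
  set c : ℂ → ℂ := fun t => w t 2 with hcdef
  set g : ℂ → ℂ := fun t => a t ^ 2 - b t ^ 3 with hgdef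
  set f : ℂ → ℝ := fun t => r (w t) with hfdef
  by_contra hgt
  push_neg at hgt
  have hfg : ∀ t, f t = 2 * (c t).re + Complex.normSq (g t) := fun t => hr (w t)
  have ha0 : a 0 = 0 := by simp [hadef, hw0]
  have hb0 : b 0 = 0 := by simp [hbdef, hw0]
  have hc0 : c 0 = 0 := by simp [hcdef, hw0]
  have hg0 : g 0 = 0 := by rw [hgdef]; simp [ha0, hb0]
  have hwA : AnalyticAt ℂ w 0 := Complex.analyticAt_iff_eventually_differentiableAt.mpr hw
  have haA : AnalyticAt ℂ a 0 := by
    have h := ((ContinuousLinearMap.proj (R := ℂ) (φ := fun _ : Fin 3 => ℂ) (0 : Fin 3)).analyticAt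
      (w 0)).comp hwA
    exact h
  have hbA : AnalyticAt ℂ b 0 := by
    have h := ((ContinuousLinearMap.proj (R := ℂ) (φ := fun _ : Fin 3 => ℂ) (1 : Fin 3)).analyticAt
      (w 0)).comp hwA
    exact h
  have hcA : AnalyticAt ℂ c 0 := by
    have h := ((ContinuousLinearMap.proj (R := ℂ) (φ := fun _ : Fin 3 => ℂ) (2 : Fin 3)).analyticAt
      (w 0)).comp hwA
    exact h
  have hgA : AnalyticAt ℂ g 0 := (haA.pow 2).sub (hbA.pow 3)
  have hre : ∀ {u : ℂ → ℂ}, AnalyticAt ℂ u 0 → AnalyticAt ℝ (fun t => (u t).re) 0 :=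
    fun hu => (Complex.reCLM.analyticAt _).comp hu.restrictScalars
  have him : ∀ {u : ℂ → ℂ}, AnalyticAt ℂ u 0 → AnalyticAt ℝ (fun t => (u t).im) 0 :=
    fun hu => (Complex.imCLM.analyticAt _).comp hu.restrictScalars
  have hfA : AnalyticAt ℝ f 0 := by
    have hfeq : f = fun t => 2 * (c t).re + ((g t).re * (g t).re + (g t).im * (g t).im) := by
      funext t; rw [hfg t, Complex.normSq_apply]
    rw [hfeq]
    exact (analyticAt_const.mul (hre hcA)).add
      (((hre hgA).mul (hre hgA)).add ((him hgA).mul (him hgA)))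
  have hvan : ∀ j, j < 7 → iteratedFDeriv ℝ j f 0 = 0 := by
    intro j hj
    rcases Nat.eq_zero_or_pos j with rfl | hjpos
    · ext m
      simp only [iteratedFDeriv_zero_apply]
      have hf0 : f 0 = 0 := by
        rw [hfg 0, hc0, hg0]; simp
      rw [hf0]
      simp
    · by_contra hne
      have h1 : nu f ≤ (j : ℝ≥0∞) := sInf_le ⟨j, hjpos, rfl, hne⟩
      have h2 : ((j : ℕ) : ℝ≥0∞) ≤ 6 := by
        have hj6 : j ≤ 6 := by omega
        exact_mod_cast hj6
      exact absurd (h1.trans h2) (not_le.mpr hgt)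
  have hO : f =O[𝓝 (0:ℂ)] fun t => ‖t‖ ^ 7 := isBigO_of_iFD_zero hfA 7 hvan
  have hwd : DifferentiableAt ℂ w 0 := hw.self_of_nhds
  have hDcomp : ∀ i, HasDerivAt (fun t => w t i) (deriv w 0 i) 0 :=
    hasDerivAt_pi.mp hwd.hasDerivAt
  have hda : deriv a 0 = deriv w 0 0 := (hDcomp 0).deriv
  have hdb : deriv b 0 = deriv w 0 1 := (hDcomp 1).deriv
  have hdc : deriv c 0 = deriv w 0 2 := (hDcomp 2).deriv
  obtain ⟨ω, hω, hray⟩ := exists_ray hcA hc0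
  by_cases hα : deriv a 0 ≠ 0
  · -- Case A : first component has nonzero derivative
    set α := deriv a 0 with hαdef
    have hα2 : α ^ 2 ≠ 0 := pow_ne_zero _ hα
    have hEA : AnalyticAt ℂ (fun t => a t - α * t) 0 :=
      haA.sub (analyticAt_const.mul analyticAt_id)
    have hE0 : a 0 - α * 0 = 0 := by rw [ha0]; ring
    have hEd : deriv (fun t => a t - α * t) 0 = 0 := by
      have h1 : HasDerivAt (fun t : ℂ => α * t) α 0 := by
        simpa using (hasDerivAt_id (0:ℂ)).const_mul α
      have h2 : HasDerivAt a α 0 := haA.differentiableAt.hasDerivAt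
      have h3 := (h2.sub h1).deriv
      rw [show (fun t => a t - α * t) = (a - fun t => α * t) from rfl, h3]; ring
    have hEO := cAnal_bigO_two hEA (by simpa using hE0) hEd
    have haO := cAnal_bigO_one haA ha0
    have hbO := cAnal_bigO_one hbA hb0
    have hαtO : (fun t : ℂ => α * t) =O[𝓝 (0:ℂ)] fun t => ‖t‖ :=
      cAnal_bigO_one (analyticAt_const.mul analyticAt_id) (by simp)
    have h1' : (fun t => (a t - α * t) * (a t + α * t)) =O[𝓝 (0:ℂ)] fun t => ‖t‖ ^ 3 := by
      have h := hEO.mul (haO.add hαtO)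
      simpa [← pow_succ] using h
    have h2' : (fun t => b t ^ 3) =O[𝓝 (0:ℂ)] fun t => ‖t‖ ^ 3 := hbO.pow 3
    have hgR : (fun t => g t - α ^ 2 * t ^ 2) =O[𝓝 (0:ℂ)] fun t => ‖t‖ ^ (2 + 1) := by
      have h3' := h1'.sub h2'
      refine h3'.congr_left fun t => ?_
      rw [hgdef]
      ring
    have hglow := lower_of_bigO hα2 hgR
    have hd : 0 < ‖α ^ 2‖ / 2 := by
      have hpos : 0 < ‖α ^ 2‖ := norm_pos_iff.mpr hα2
      positivity
    exact final_contra hfg hO hd (m := 2) (by norm_num) hglow hω hray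
  · push_neg at hα
    by_cases hβ : deriv b 0 ≠ 0
    · -- Case B : second component has nonzero derivative
      set β := deriv b 0 with hβdef
      have hβ3 : -β ^ 3 ≠ 0 := neg_ne_zero.mpr (pow_ne_zero _ hβ)
      have haO2 := cAnal_bigO_two haA ha0 hα
      have hbO := cAnal_bigO_one hbA hb0
      have hβtO : (fun t : ℂ => β * t) =O[𝓝 (0:ℂ)] fun t => ‖t‖ :=
        cAnal_bigO_one (analyticAt_const.mul analyticAt_id) (by simp)
      have hEA : AnalyticAt ℂ (fun t => b t - β * t) 0 :=
        hbA.sub (analyticAt_const.mul analyticAt_id)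
      have hEd : deriv (fun t => b t - β * t) 0 = 0 := by
        have h1 : HasDerivAt (fun t : ℂ => β * t) β 0 := by
          simpa using (hasDerivAt_id (0:ℂ)).const_mul β
        have h2 : HasDerivAt b β 0 := hbA.differentiableAt.hasDerivAt
        have h3 := (h2.sub h1).deriv
        rw [show (fun t => b t - β * t) = (b - fun t => β * t) from rfl, h3]; ring
      have hEO := cAnal_bigO_two hEA (by simp [hb0]) hEd
      have ha2O : (fun t => a t ^ 2) =O[𝓝 (0:ℂ)] fun t => ‖t‖ ^ 4 := by
        have h := haO2.pow 2
        simpa [← pow_mul] using h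
      have hquadO : (fun t => b t ^ 2 + b t * (β * t) + (β * t) ^ 2)
          =O[𝓝 (0:ℂ)] fun t => ‖t‖ ^ 2 := by
        have h1 : (fun t => b t ^ 2) =O[𝓝 (0:ℂ)] fun t => ‖t‖ ^ 2 := hbO.pow 2
        have h2 : (fun t => b t * (β * t)) =O[𝓝 (0:ℂ)] fun t => ‖t‖ ^ 2 := by
          have h := hbO.mul hβtO
          simpa [← pow_two] using h
        have h3 : (fun t : ℂ => (β * t) ^ 2) =O[𝓝 (0:ℂ)] fun t => ‖t‖ ^ 2 := hβtO.pow 2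
        exact (h1.add h2).add h3
      have hprodO : (fun t => (b t - β * t) * (b t ^ 2 + b t * (β * t) + (β * t) ^ 2))
          =O[𝓝 (0:ℂ)] fun t => ‖t‖ ^ 4 := by
        have h := hEO.mul hquadO
        simpa [← pow_add] using h
      have hgR : (fun t => g t - (-β ^ 3) * t ^ 3) =O[𝓝 (0:ℂ)] fun t => ‖t‖ ^ (3 + 1) := by
        have h3' := ha2O.sub hprodO
        refine h3'.congr_left fun t => ?_
        rw [hgdef]
        ring
      have hglow := lower_of_bigO hβ3 hgR
      have hd : 0 < ‖-β ^ 3‖ / 2 := by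
        have hpos : 0 < ‖-β ^ 3‖ := norm_pos_iff.mpr hβ3
        positivity
      exact final_contra hfg hO hd (m := 3) (by norm_num) hglow hω hray
    · -- Case C : third component has nonzero derivative
      push_neg at hβ
      have hγ : deriv c 0 ≠ 0 := by
        intro hγ0
        apply hw'
        have e0 : deriv w 0 0 = 0 := hda.symm.trans hα
        have e1 : deriv w 0 1 = 0 := hdb.symm.trans hβ
        have e2 : deriv w 0 2 = 0 := hdc.symm.trans hγ0
        funext i
        fin_cases i
        · exact e0
        · exact e1
        · exact e2
      set γ := deriv c 0 with hγdef
      -- first derivative of f at 0 is nonzero, contradicting hvan 1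
      have hcD : HasFDerivAt c (fderiv ℂ c 0) 0 := hcA.differentiableAt.hasFDerivAt
      have hcR : HasFDerivAt c ((fderiv ℂ c 0).restrictScalars ℝ) 0 := hcD.restrictScalars ℝ
      have hreD : HasFDerivAt (fun t => (c t).re)
          (Complex.reCLM.comp ((fderiv ℂ c 0).restrictScalars ℝ)) 0 :=
        (Complex.reCLM.hasFDerivAt).comp 0 hcR
      have h2c : HasFDerivAt (fun t => 2 * (c t).re)
          ((2:ℝ) • (Complex.reCLM.comp ((fderiv ℂ c 0).restrictScalars ℝ))) 0 :=
        hreD.const_mul 2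
      have hgD : HasFDerivAt g (fderiv ℝ g 0) 0 :=
        (hgA.restrictScalars).differentiableAt.hasFDerivAt
      have hgre : HasFDerivAt (fun t => (g t).re)
          (Complex.reCLM.comp (fderiv ℝ g 0)) 0 := (Complex.reCLM.hasFDerivAt).comp 0 hgD
      have hgim : HasFDerivAt (fun t => (g t).im)
          (Complex.imCLM.comp (fderiv ℝ g 0)) 0 := (Complex.imCLM.hasFDerivAt).comp 0 hgD
      have hsq1 : HasFDerivAt (fun t => (g t).re * (g t).re) (0 : ℂ →L[ℝ] ℝ) 0 := by
        have h := hgre.mul hgre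
        simp only [hg0, Complex.zero_re, zero_smul, add_zero] at h; exact h
      have hsq2 : HasFDerivAt (fun t => (g t).im * (g t).im) (0 : ℂ →L[ℝ] ℝ) 0 := by
        have h := hgim.mul hgim
        simp only [hg0, Complex.zero_im, zero_smul, add_zero] at h; exact h
      have hnsq : HasFDerivAt (fun t => Complex.normSq (g t)) (0 : ℂ →L[ℝ] ℝ) 0 := by
        have heq : (fun t => Complex.normSq (g t))
            = fun t => (g t).re * (g t).re + (g t).im * (g t).im := by
          funext t; rw [Complex.normSq_apply]
        rw [heq]
        have h := hsq1.add hsq2; simp only [add_zero] at h; exact h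
      have hfD : HasFDerivAt f
          ((2:ℝ) • (Complex.reCLM.comp ((fderiv ℂ c 0).restrictScalars ℝ))) 0 := by
        have heq : f = fun t => 2 * (c t).re + Complex.normSq (g t) := funext hfg
        rw [heq]
        have h := h2c.add hnsq; simp only [add_zero] at h; exact h
      have hval : fderiv ℝ f 0 ((starRingEnd ℂ) γ) = 2 * Complex.normSq γ := by
        rw [hfD.fderiv]
        simp only [ContinuousLinearMap.smul_apply, ContinuousLinearMap.coe_comp',
          Function.comp_apply, ContinuousLinearMap.coe_restrictScalars']
        have hlin : (fderiv ℂ c 0) ((starRingEnd ℂ) γ) = (starRingEnd ℂ) γ * γ := by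
          have hsm := (fderiv ℂ c 0).map_smul ((starRingEnd ℂ) γ) 1
          simp only [smul_eq_mul, mul_one] at hsm
          rw [hsm]
          congr 1
        rw [hlin]
        have : (starRingEnd ℂ) γ * γ = (Complex.normSq γ : ℂ) := by
          rw [mul_comm, Complex.mul_conj]
        rw [this]
        simp [smul_eq_mul]
      have hzero : fderiv ℝ f 0 ((starRingEnd ℂ) γ) = 0 := by
        have h1 := hvan 1 (by norm_num)
        have h2 : iteratedFDeriv ℝ 1 f 0 (fun _ => (starRingEnd ℂ) γ) = 0 := by
          rw [h1]; simp
        rw [iteratedFDeriv_one_apply] at h2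
        exact h2
      rw [hval] at hzero
      have : Complex.normSq γ ≠ 0 := Complex.normSq_pos.mpr hγ |>.ne'
      apply this
      linarith

/-- For `r(z) = 2Re(z₃) + |z₁² − z₂³|²`: every regular holomorphic
germ has contact order at most `6` with `{r = 0}` at `0`; the curve `η(t) = (0,t,0)`
satisfies `r(η(t)) = |t|⁶`, which vanishes to order exactly `6`; hence
`Δ₁^reg(M,0) = 6`. -/
theorem regular_order_of_contact_of_cusp_example
    (r : (Fin 3 → ℂ) → ℝ)
    (hr : ∀ z : Fin 3 → ℂ, r z = 2 * (z 2).re + Complex.normSq ((z 0) ^ 2 - (z 1) ^ 3))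
    (η : ℂ → Fin 3 → ℂ) (hη : ∀ t, η t = ![0, t, 0]) :
    (∀ w : ℂ → Fin 3 → ℂ, HoloGerm w → w 0 = 0 → deriv w 0 ≠ 0 →
      nu (fun t => r (w t)) ≤ 6) ∧
    (∀ t, r (η t) = ‖t‖ ^ 6) ∧
    VanishExactly (fun t => r (η t)) 6 ∧
    regOrder r = 6 := by
  have hηe : η = fun t => (![0, t, 0] : Fin 3 → ℂ) := funext hη
  have hp1 := part_one r hr
  have hp2 : ∀ t, r (η t) = ‖t‖ ^ 6 := by
    intro t
    rw [hη t, hr]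
    have h0 : (![0, t, 0] : Fin 3 → ℂ) 0 = 0 := rfl
    have h1 : (![0, t, 0] : Fin 3 → ℂ) 1 = t := rfl
    have h2 : (![0, t, 0] : Fin 3 → ℂ) 2 = 0 := rfl
    rw [h0, h1, h2]
    have hneg : (0:ℂ) ^ 2 - t ^ 3 = -(t ^ 3) := by ring
    rw [hneg, Complex.normSq_neg, ← Complex.sq_norm, norm_pow]
    simp only [Complex.zero_re, mul_zero, zero_add]
    ring
  have hru : (fun t => r (η t)) = u0 := by
    funext t
    rw [hp2 t]
    unfold u0
    rw [← Complex.sq_norm]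
    ring
  have hp3 : VanishExactly (fun t => r (η t)) 6 := by
    rw [hru]
    exact ⟨fun j hj => u0_vanish_lt6 j hj, u0_iFD6_ne⟩
  have hnu : nu (fun t => r (η t)) = 6 := by
    apply le_antisymm
    · apply sInf_le
      exact ⟨6, by norm_num, by norm_cast, hp3.2⟩
    · apply le_sInf
      rintro x ⟨m, hm1, rfl, hmne⟩
      by_contra hlt
      push_neg at hlt
      have hm6 : m < 6 := by exact_mod_cast hlt
      exact hmne (hp3.1 m hm6)
  have hηd : ∀ t : ℂ, HasDerivAt η ![0, 1, 0] t := by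
    intro t
    rw [hηe, hasDerivAt_pi]
    intro i
    fin_cases i
    · simpa using hasDerivAt_const t (0:ℂ)
    · simpa using hasDerivAt_id' t
    · simpa using hasDerivAt_const t (0:ℂ)
  have hHolo : HoloGerm η := Eventually.of_forall fun t => (hηd t).differentiableAt
  have hη0 : η 0 = 0 := by
    rw [hη 0]
    funext i
    fin_cases i <;> rfl
  have hη' : deriv η 0 ≠ 0 := by
    rw [(hηd 0).deriv]
    intro hcon
    have hco := congrFun hcon 1
    simp at hco
  refine ⟨hp1, hp2, hp3, ?_⟩
  apply le_antisymm
  · unfold regOrder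
    apply iSup_le; intro z
    apply iSup_le; intro hz
    apply iSup_le; intro hz0
    apply iSup_le; intro hz'
    exact hp1 z hz hz0 hz'
  · calc (6:ℝ≥0∞) = nu (fun t => r (η t)) := hnu.symm
    _ ≤ regOrder r := by
      unfold regOrder
      exact le_iSup_of_le η (le_iSup_of_le hHolo (le_iSup_of_le hη0
        (le_iSup_of_le hη' le_rfl)))

end
end

section
/- Define r:ℂ³→ℝ by r(z) = 2Re(z₃) + |z₁² − z₂³|², and let (M,0) be the germ of the real hypersurface {r = 0} at 0. Then: (i) the nonconstant holomorphic curve z(t) = (t³, t², 0) satisfies r(z(t)) = 0 identically, so the singular order of contact satisfies Δ₁(M,0) = ∞; and (ii) every nonconstant holomorphic germ w = (w₁,w₂,w₃):(ℂ,0)→(ℂ³,0) with r∘w ≡ 0 satisfies w₃ ≡ 0 and w₁² ≡ w₂³, i.e., the cuspidal curve {z₃ = 0, z₁² = z₂³} is the unique holomorphic curve germ contained in (M,0). -/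
open Topology Filter Complex
open scoped ENNReal

noncomputable section

lemma re_nonpos_eventually_zero' (f : ℂ → ℂ)
    (hd : ∀ᶠ t in 𝓝 (0:ℂ), DifferentiableAt ℂ f t)
    (h0 : f 0 = 0) (hre : ∀ᶠ t in 𝓝 (0:ℂ), (f t).re ≤ 0) :
    ∀ᶠ t in 𝓝 (0:ℂ), f t = 0 := by
  have hdg : ∀ᶠ t in 𝓝 (0:ℂ), DifferentiableAt ℂ (fun s => Complex.exp (f s)) t :=
    hd.mono fun t ht => ht.cexp
  have hmax : IsLocalMax (norm ∘ fun s => Complex.exp (f s)) 0 := by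
    filter_upwards [hre] with t ht
    simp only [Function.comp_apply, Complex.norm_exp, h0]
    exact Real.exp_le_exp.2 (by simpa using ht)
  have hev := Complex.eventually_eq_of_isLocalMax_norm hdg hmax
  have hcont : ∀ᶠ t in 𝓝 (0:ℂ), ‖f t‖ < 1 := by
    have hc : Tendsto (fun t => ‖f t‖) (𝓝 0) (𝓝 ‖f 0‖) :=
      (hd.self_of_nhds.continuousAt.tendsto).norm
    rw [h0, norm_zero] at hc
    exact hc.eventually_lt_const one_pos
  filter_upwards [hev, hcont] with t ht hlt
  rw [h0, Complex.exp_zero] at ht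
  obtain ⟨n, hn⟩ := Complex.exp_eq_one_iff.1 ht
  rcases eq_or_ne n 0 with h | h
  · simpa [h] using hn
  · exfalso
    have h1 : (1:ℝ) ≤ |(n:ℝ)| := by exact_mod_cast Int.one_le_abs h
    rw [hn] at hlt
    have h2 : ‖(n:ℂ) * (2 * Real.pi * Complex.I)‖ = |(n:ℝ)| * (2 * Real.pi) := by
      simp [norm_mul, Complex.norm_intCast, Complex.norm_real, abs_of_pos Real.pi_pos]
    rw [h2] at hlt
    nlinarith [Real.pi_gt_three]

lemma fderiv_sq' (y : ℂ) :
    fderiv ℝ (fun t : ℂ => t ^ 2) y = ((2:ℝ) • ContinuousLinearMap.mul ℝ ℂ) y := by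
  have h1 : HasDerivAt (fun t : ℂ => t ^ 2) (2 * y) y := by
    simpa using hasDerivAt_pow 2 y
  have h2 := (h1.hasFDerivAt.restrictScalars ℝ).fderiv
  rw [h2]; ext m; simp; ring

lemma itfd2_sq' : iteratedFDeriv ℝ 2 (fun t : ℂ => t ^ 2) 0 ![1, 1] = 2 := by
  rw [iteratedFDeriv_two_apply]
  have : fderiv ℝ (fun t : ℂ => t ^ 2) = ⇑((2:ℝ) • ContinuousLinearMap.mul ℝ ℂ) :=
    funext fderiv_sq'
  rw [this, ContinuousLinearMap.fderiv]
  simp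

/-- For `r(z) = 2Re(z₃) + |z₁² − z₂³|²`: the singular curve
`z(t) = (t³, t², 0)` lies in `{r = 0}`, so `Δ₁(M,0) = ∞`; moreover every nonconstant
holomorphic germ contained in `(M,0)` satisfies `w₃ ≡ 0` and `w₁² ≡ w₂³`, i.e. the
cuspidal curve is the unique holomorphic curve germ in `(M,0)`. -/
theorem unique_singular_curve_in_cusp_example
    (r : (Fin 3 → ℂ) → ℝ)
    (hr : ∀ z : Fin 3 → ℂ, r z = 2 * (z 2).re + Complex.normSq ((z 0) ^ 2 - (z 1) ^ 3))
    (z : ℂ → Fin 3 → ℂ) (hz : ∀ t, z t = ![t ^ 3, t ^ 2, 0]) :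
    (∀ t, r (z t) = 0) ∧
    singOrder r = ⊤ ∧
    (∀ w : ℂ → Fin 3 → ℂ, HoloGerm w → w 0 = 0 → NonconstGerm w →
      (∀ᶠ t in 𝓝 (0 : ℂ), r (w t) = 0) →
      (∀ᶠ t in 𝓝 (0 : ℂ), w t 2 = 0) ∧
      (∀ᶠ t in 𝓝 (0 : ℂ), (w t 0) ^ 2 = (w t 1) ^ 3)) := by
  have hzz : z = fun t => ![t ^ 3, t ^ 2, 0] := funext hz
  -- part (i)
  have hi : ∀ t, r (z t) = 0 := by
    intro t
    have h1 : (t ^ 3) ^ 2 - (t ^ 2) ^ 3 = 0 := by ring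
    simp [hr, hz, h1]
  refine ⟨hi, ?_, ?_⟩
  · -- singOrder r = ⊤
    have hc : ContDiff ℝ (⊤ : ℕ∞) z := by
      rw [hzz]
      apply contDiff_pi.2
      intro i
      fin_cases i <;> simp <;> fun_prop
    have hholo : HoloGerm z := by
      apply Eventually.of_forall
      intro t
      rw [hzz]
      apply differentiableAt_pi.2
      intro i
      fin_cases i <;> simp <;> fun_prop
    have hz0 : z 0 = 0 := by funext i; rw [hz]; fin_cases i <;> simp
    have hnc : NonconstGerm z := by
      intro h
      have h' : ∀ᶠ t in 𝓝 (0:ℂ), t = 0 := by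
        filter_upwards [h] with t ht
        have : z t 1 = z 0 1 := by rw [ht]
        rw [hz t, hz 0] at this
        simpa using pow_eq_zero_iff (n := 2) (by norm_num) |>.1 (by simpa using this)
      obtain ⟨t, ht1, ht2⟩ :=
        ((h'.filter_mono nhdsWithin_le_nhds).and
          (eventually_mem_nhdsWithin (s := {(0:ℂ)}ᶜ))).exists
      exact ht2 ht1
    have h2ne : iteratedFDeriv ℝ 2 z 0 ≠ 0 := by
      intro H
      have hcomp := (ContinuousLinearMap.proj (R := ℝ) (φ := fun _ : Fin 3 => ℂ)
        1).iteratedFDeriv_comp_left (hc.contDiffAt (x := 0)) (i := 2) (WithTop.coe_le_coe.2 le_top)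
      have hg : (ContinuousLinearMap.proj (R := ℝ) (φ := fun _ : Fin 3 => ℂ) 1) ∘ z
          = fun t : ℂ => t ^ 2 := by
        funext t; simp [hz t]
      rw [hg, H] at hcomp
      have h2 := itfd2_sq'
      rw [hcomp] at h2
      simp at h2
    have hnuz : nu z ≤ 2 := sInf_le ⟨2, one_le_two, by norm_num, h2ne⟩
    have hnutop : nu (fun t => r (z t)) = ⊤ := by
      apply sInf_eq_top.2
      rintro a ⟨m, hm1, hm2, hm3⟩
      exfalso
      apply hm3
      have : (fun t => r (z t)) = fun _ : ℂ => (0:ℝ) := funext hi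
      rw [this]
      simp [iteratedFDeriv_zero_fun]
    have hterm : nu (fun t => r (z t)) / nu z = ⊤ := by
      rw [hnutop]
      exact ENNReal.top_div_of_ne_top (lt_of_le_of_lt hnuz (by norm_num)).ne
    apply top_unique
    rw [← hterm]
    exact le_iSup_of_le z (le_iSup_of_le hholo (le_iSup_of_le hz0
      (le_iSup_of_le hnc le_rfl)))
  · -- uniqueness of the cuspidal curve
    intro w hw hw0 _ hrw
    have hd3 : ∀ᶠ t in 𝓝 (0:ℂ), DifferentiableAt ℂ (fun t => w t 2) t :=
      hw.mono fun t ht => (differentiableAt_pi.1 ht) 2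
    have h03 : w 0 2 = 0 := by rw [hw0]; rfl
    have hre : ∀ᶠ t in 𝓝 (0:ℂ), ((fun t => w t 2) t).re ≤ 0 := by
      filter_upwards [hrw] with t ht
      rw [hr] at ht
      have := Complex.normSq_nonneg ((w t 0) ^ 2 - (w t 1) ^ 3)
      show (w t 2).re ≤ 0
      linarith
    have hzero := re_nonpos_eventually_zero' (fun t => w t 2) hd3 h03 hre
    refine ⟨hzero, ?_⟩
    filter_upwards [hrw, hzero] with t ht h3
    rw [hr, h3] at ht
    simp only [Complex.zero_re, mul_zero, zero_add] at ht
    exact sub_eq_zero.1 (Complex.normSq_eq_zero.1 ht)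


end
end
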